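/- Consider a cyclic mass-action system with n ≥ 2 complexes that is complex balanced at x* ∈ ℝ_{>0}^m, let μ be a permutation of {1, …, n}, and let I ⊆ {1, …, m} be nonempty. If cl(S_μ) ∩ L_I ≠ ∅, then there exists α ∈ ℝ^m with α_i < 0 for all i ∈ I and α_i = 0 for all i ∉ I, such that ⟨α, f(x)⟩ ≤ 0 for every x ∈ cl(S_μ). -/

import Mathlib

open Filter Topology

noncomputable section

/-- The monomial `x^z = ∏ l, x l ^ z l`. -/
def mono {m : ℕ} (zv : Fin m → ℕ) (x : Fin m → ℝ) : ℝ := ∏ l, x l ^ zv l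

/-- The ratio monomial `(x/x*)^z = ∏ l, (x l / x* l) ^ z l`. -/
def ratio {m : ℕ} (xstar x : Fin m → ℝ) (zv : Fin m → ℕ) : ℝ :=
  ∏ l, (x l / xstar l) ^ zv l

/-- The mass-action vector field `f(x) = Σ_{i,j} k(i,j) (z_j - z_i) x^{z_i}`
(terms with `k i j = 0` vanish, so this is the sum over reactions). -/
def maf {m n : ℕ} (z : Fin n → Fin m → ℕ) (k : Fin n → Fin n → ℝ) (x : Fin m → ℝ) :
    Fin m → ℝ :=
  fun l => ∑ i, ∑ j, k i j * ((z j l : ℝ) - (z i l : ℝ)) * mono (z i) x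

/-- `x*` is a complex balanced equilibrium. -/
def complexBalanced {m n : ℕ} (z : Fin n → Fin m → ℕ) (k : Fin n → Fin n → ℝ)
    (xstar : Fin m → ℝ) : Prop :=
  ∀ i, ∑ j, k j i * mono (z j) xstar = mono (z i) xstar * ∑ j, k i j

/-- Cyclic successor on `Fin n`. -/
def cyc {n : ℕ} (i : Fin n) : Fin n := ⟨(i.val + 1) % n, Nat.mod_lt _ i.pos⟩

/-- The system is cyclic: its reactions are exactly `C_i → C_{i+1}` (cyclically). -/
def isCyclic {n : ℕ} (k : Fin n → Fin n → ℝ) : Prop :=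
  (∀ i, 0 < k i (cyc i)) ∧ ∀ i j, j ≠ cyc i → k i j = 0

/-- Inclusion `Fin (n-1) → Fin n`. -/
def emb {n : ℕ} (i : Fin (n - 1)) : Fin n := ⟨i.val, by have := i.isLt; omega⟩

/-- Successor inclusion `Fin (n-1) → Fin n`, `i ↦ i+1`. -/
def embS {n : ℕ} (i : Fin (n - 1)) : Fin n := ⟨i.val + 1, by have := i.isLt; omega⟩

/-- The stratum associated with a permutation `μ` of the complexes. -/
def stratum {m n : ℕ} (z : Fin n → Fin m → ℕ) (xstar : Fin m → ℝ)
    (μ : Equiv.Perm (Fin n)) : Set (Fin m → ℝ) :=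
  {x | (∀ l, 0 < x l) ∧
    ∀ i : Fin (n - 1), ratio xstar x (z (μ (emb i))) > ratio xstar x (z (μ (embS i)))}

/-- `L_I`: the relative interior of the face of the nonnegative orthant given by `I`. -/
def LI {m : ℕ} (I : Finset (Fin m)) : Set (Fin m → ℝ) :=
  {x | (∀ i ∈ I, x i = 0) ∧ ∀ i ∉ I, 0 < x i}

/-- Semi-locking set. -/
def semiLocking {m n : ℕ} (z : Fin n → Fin m → ℕ) (k : Fin n → Fin n → ℝ)
    (I : Finset (Fin m)) : Prop :=
  I.Nonempty ∧ ∀ i j : Fin n, 0 < k i j → (∃ l ∈ I, 0 < z j l) → ∃ l ∈ I, 0 < z i l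

/-- The stoichiometric subspace. -/
def stoich {m n : ℕ} (z : Fin n → Fin m → ℕ) (k : Fin n → Fin n → ℝ) :
    Submodule ℝ (Fin m → ℝ) :=
  Submodule.span ℝ {v | ∃ i j : Fin n, 0 < k i j ∧ v = fun l => (z j l : ℝ) - (z i l : ℝ)}

/-!
In the coordinates `y = log x - log x*` the stratum `S_μ` is the open polyhedral cone
`{y | D y > 0}`, where the rows of `D` are `z_{μ(i)} - z_{μ(i+1)}`. By Farkas' lemma (in
Motzkin's form) either some `α`, negative on `I` and zero off `I`, has `D α ≥ 0`, or some `λ ≥ 0`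
makes `W = λᵀ D` nonnegative on `I` and not zero there. The second alternative is impossible:
`⟨W, log x⟩` is bounded below on `S_μ`, yet tends to `-∞` as `x` approaches a point of `L_I`.
In the first, `a_j = ⟨α, z_j⟩` and the ratios `(x/x*)^{z_j}` are both antitone along `μ` on
`cl(S_μ)`, and complex balance of a cycle forces the fluxes `k(i, i+1) (x*)^{z_i}` to equal a
common `c > 0`, so `⟨α, f(x)⟩ = c Σ_i (x/x*)^{z_i} (a_{i+1} - a_i) ≤ 0` by the rearrangement
inequality.
-/

open Matrix

section ConicCaratheodory

variable {E : Type*} [AddCommGroup E] [Module ℝ E] {ι : Type*}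

theorem exists_erase_nonneg_sum_smul_eq [DecidableEq ι] (c : ι → E) {s : Finset ι}
    {lam g : ι → ℝ} (hlam : ∀ i ∈ s, 0 ≤ lam i) (hg : ∑ i ∈ s, g i • c i = 0)
    (hpos : ∃ i ∈ s, 0 < g i) :
    ∃ j ∈ s, ∃ mu : ι → ℝ, (∀ i ∈ s.erase j, 0 ≤ mu i) ∧
      ∑ i ∈ s.erase j, mu i • c i = ∑ i ∈ s, lam i • c i := by
  obtain ⟨j, hj, hjmin⟩ := (s.filter (0 < g ·)).exists_min_image (fun i => lam i / g i)
    (by obtain ⟨i, hi, h⟩ := hpos; exact ⟨i, Finset.mem_filter.2 ⟨hi, h⟩⟩)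
  rw [Finset.mem_filter] at hj
  set t := lam j / g j
  refine ⟨j, hj.1, fun i => lam i - t * g i, fun i hi => ?_, ?_⟩
  · have hi := Finset.mem_of_mem_erase hi
    rcases le_or_gt (g i) 0 with hgi | hgi
    · nlinarith [hlam i hi, div_nonneg (hlam j hj.1) hj.2.le]
    · have := hjmin i (Finset.mem_filter.2 ⟨hi, hgi⟩)
      rw [le_div_iff₀ hgi] at this
      linarith
  · rw [Finset.sum_erase s (by simp [t, div_mul_cancel₀ _ hj.2.ne'])]
    simp only [sub_smul, mul_smul, Finset.sum_sub_distrib, ← Finset.smul_sum, hg, smul_zero,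
      sub_zero]

theorem exists_linearIndepOn_nonneg_sum_smul_eq (c : ι → E) (s : Finset ι) (lam : ι → ℝ)
    (hlam : ∀ i ∈ s, 0 ≤ lam i) :
    ∃ t : Finset ι, LinearIndepOn ℝ c t ∧ ∃ mu : ι → ℝ, (∀ i ∈ t, 0 ≤ mu i) ∧
      ∑ i ∈ t, mu i • c i = ∑ i ∈ s, lam i • c i := by
  classical
  induction s using Finset.strongInduction generalizing lam with
  | H s ih =>
  by_cases hs : LinearIndepOn ℝ c s
  · exact ⟨s, hs, lam, hlam, rfl⟩
  obtain ⟨g, hg, i, hi, hgi⟩ : ∃ g : ι → ℝ, ∑ i ∈ s, g i • c i = 0 ∧ ∃ i ∈ s, g i ≠ 0 := by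
    simpa [linearIndepOn_finset_iff] using hs
  obtain ⟨g, hg, hpos⟩ : ∃ g : ι → ℝ, ∑ i ∈ s, g i • c i = 0 ∧ ∃ i ∈ s, 0 < g i := by
    rcases hgi.lt_or_gt with h | h
    · exact ⟨-g, by simp [neg_smul, hg], i, hi, by simpa using h⟩
    · exact ⟨g, hg, i, hi, h⟩
  obtain ⟨j, hj, mu, hmu, hsum⟩ := exists_erase_nonneg_sum_smul_eq c hlam hg hpos
  obtain ⟨t, ht, nu, hnu, hsum'⟩ := ih _ (Finset.erase_ssubset hj) mu hmu
  exact ⟨t, ht, nu, hnu, hsum'.trans hsum⟩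

end ConicCaratheodory

theorem PointedCone.isClosed_hull_range {E : Type*} [AddCommGroup E] [TopologicalSpace E]
    [IsTopologicalAddGroup E] [Module ℝ E] [ContinuousSMul ℝ E] [T2Space E]
    {ι : Type*} [Fintype ι] (c : ι → E) :
    IsClosed (PointedCone.hull ℝ (Set.range c) : Set E) := by
  classical
  have hunion : (PointedCone.hull ℝ (Set.range c) : Set E) =
      ⋃ (t : Finset ι) (_ : LinearIndepOn ℝ c t),
        Fintype.linearCombination ℝ (fun i : t => c i) '' Set.Ici 0 := by
    ext x
    simp only [SetLike.mem_coe, Set.mem_iUnion, Set.mem_image, Fintype.linearCombination_apply]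
    constructor
    · intro hx
      obtain ⟨a, rfl⟩ := (Submodule.mem_span_range_iff_exists_fun {c : ℝ // 0 ≤ c}).1 hx
      obtain ⟨t, ht, mu, hmu, hsum⟩ :=
        exists_linearIndepOn_nonneg_sum_smul_eq c Finset.univ (fun i => a i) fun i _ => (a i).2
      refine ⟨t, ht, fun i => mu i, fun i => hmu i i.2, ?_⟩
      rw [Finset.sum_coe_sort t (fun i => mu i • c i), hsum]
      simp [Nonneg.coe_smul]
    · rintro ⟨t, -, q, hq, rfl⟩
      refine Submodule.sum_mem _ fun i _ => ?_
      rw [← Nonneg.mk_smul (q i) (hq i)]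
      exact Submodule.smul_mem _ _ (Submodule.subset_span ⟨i, rfl⟩)
  rw [hunion]
  refine isClosed_iUnion_of_finite fun t => isClosed_iUnion_of_finite fun ht => ?_
  exact (LinearMap.isClosedEmbedding_of_injective (LinearMap.ker_eq_bot.2
    ht.fintypeLinearCombination_injective)).isClosedMap _ isClosed_Ici

namespace Matrix

variable {ι J κ : Type*} [Fintype ι] [Fintype J] [Fintype κ]

theorem exists_nonneg_vecMul_eq_or_exists_dotProduct_neg (A : Matrix J ι ℝ) (b : ι → ℝ) :
    (∃ y, 0 ≤ y ∧ y ᵥ* A = b) ∨ ∃ x, 0 ≤ A *ᵥ x ∧ b ⬝ᵥ x < 0 := by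
  classical
  by_cases hb : b ∈ PointedCone.hull ℝ (Set.range A)
  · obtain ⟨a, ha⟩ := (Submodule.mem_span_range_iff_exists_fun {c : ℝ // 0 ≤ c}).1 hb
    refine Or.inl ⟨fun j => a j, fun j => (a j).2, ?_⟩
    simpa [vecMul_eq_sum, Nonneg.coe_smul] using ha
  obtain ⟨f, hf, hfb⟩ := ProperCone.hyperplane_separation_point
    ⟨PointedCone.hull ℝ (Set.range A), PointedCone.isClosed_hull_range A⟩ hb
  set x : ι → ℝ := fun i => f fun j => if i = j then 1 else 0
  have hfx : ∀ v, f v = v ⬝ᵥ x := fun v => by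
    simpa [dotProduct] using LinearMap.pi_apply_eq_sum_univ f.toLinearMap v
  refine Or.inr ⟨x, fun j => ?_, by rwa [← hfx]⟩
  simpa [mulVec, ← hfx] using hf (A j) (Submodule.subset_span ⟨j, rfl⟩)

theorem exists_neg_on_mulVec_nonneg (D : Matrix ι κ ℝ) (I : Finset κ)
    (h : ∀ y : ι → ℝ, 0 ≤ y → (∀ l ∈ I, 0 ≤ (y ᵥ* D) l) → ∑ l ∈ I, (y ᵥ* D) l ≤ 0) :
    ∃ α : κ → ℝ, (∀ l ∈ I, α l < 0) ∧ (∀ l ∉ I, α l = 0) ∧ 0 ≤ D *ᵥ α := by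
  classical
  set u : κ → ℝ := fun l => if l ∈ I then 1 else 0
  rcases exists_nonneg_vecMul_eq_or_exists_dotProduct_neg
      (fromRows (diagonal u * Dᵀ) (1 : Matrix ι ι ℝ)) (-(D *ᵥ u)) with ⟨ν, hν, hνD⟩ | ⟨y, hy, hyu⟩
  · refine ⟨-(u + (ν ∘ Sum.inl) * u), fun l hl => ?_, fun l hl => by simp [u, hl], ?_⟩
    · have : 0 ≤ ν (Sum.inl l) := hν _
      simp [u, hl]
      linarith
    · have hdiag : (ν ∘ Sum.inl) ᵥ* diagonal u = (ν ∘ Sum.inl) * u :=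
        funext (vecMul_diagonal _ _)
      rw [vecMul_fromRows, vecMul_one, ← vecMul_vecMul, vecMul_transpose, hdiag] at hνD
      have : D *ᵥ -(u + (ν ∘ Sum.inl) * u) = ν ∘ Sum.inr := by
        rw [mulVec_neg, mulVec_add]
        linear_combination -hνD
      rw [this]
      exact fun i => hν (Sum.inr i)
  · rw [fromRows_mulVec, one_mulVec] at hy
    have hy0 : 0 ≤ y := fun i => hy (Sum.inr i)
    have hW : ∀ l ∈ I, 0 ≤ (y ᵥ* D) l := fun l hl => by
      simpa [← mulVec_mulVec, mulVec_transpose, mulVec_diagonal, u, hl] using hy (Sum.inl l)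
    have := h y hy0 hW
    rw [neg_dotProduct, dotProduct_comm, dotProduct_mulVec] at hyu
    simp [dotProduct, u] at hyu
    linarith

end Matrix

section MassAction

variable {m n : ℕ}

def complexMatrix (z : Fin n → Fin m → ℕ) : Matrix (Fin n) (Fin m) ℝ :=
  Matrix.of fun j l => (z j l : ℝ)

def stratumMatrix (z : Fin n → Fin m → ℕ) (μ : Equiv.Perm (Fin n)) :
    Matrix (Fin (n - 1)) (Fin m) ℝ :=
  (complexMatrix z).submatrix (μ ∘ emb) id - (complexMatrix z).submatrix (μ ∘ embS) id

theorem stratumMatrix_mulVec (z : Fin n → Fin m → ℕ) (μ : Equiv.Perm (Fin n)) (v : Fin m → ℝ)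
    (i : Fin (n - 1)) :
    (stratumMatrix z μ *ᵥ v) i =
      (complexMatrix z *ᵥ v) (μ (emb i)) - (complexMatrix z *ᵥ v) (μ (embS i)) := by
  rw [stratumMatrix, sub_mulVec]
  rfl

theorem ratio_pos {zv : Fin m → ℕ} {xstar x : Fin m → ℝ} (hxs : ∀ l, 0 < xstar l)
    (hx : ∀ l, 0 < x l) : 0 < ratio xstar x zv :=
  Finset.prod_pos fun l _ => pow_pos (div_pos (hx l) (hxs l)) _

theorem log_ratio {zv : Fin m → ℕ} {xstar x : Fin m → ℝ} (hxs : ∀ l, 0 < xstar l)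
    (hx : ∀ l, 0 < x l) :
    Real.log (ratio xstar x zv) = ∑ l, (zv l : ℝ) * (Real.log (x l) - Real.log (xstar l)) := by
  rw [ratio, Real.log_prod fun l _ => (pow_pos (div_pos (hx l) (hxs l)) _).ne']
  simp only [Real.log_pow, Real.log_div (hx _).ne' (hxs _).ne']

theorem stratumMatrix_mulVec_log_pos {z : Fin n → Fin m → ℕ} {xstar x : Fin m → ℝ}
    {μ : Equiv.Perm (Fin n)} (hxs : ∀ l, 0 < xstar l) (hx : x ∈ stratum z xstar μ)
    (i : Fin (n - 1)) :
    0 < (stratumMatrix z μ *ᵥ (Real.log ∘ x - Real.log ∘ xstar)) i := by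
  have hlog : ∀ j, (complexMatrix z *ᵥ (Real.log ∘ x - Real.log ∘ xstar)) j =
      Real.log (ratio xstar x (z j)) := fun j => by
    simp [log_ratio hxs hx.1, complexMatrix, Matrix.mulVec, dotProduct]
  rw [stratumMatrix_mulVec, hlog, hlog, sub_pos]
  exact Real.log_lt_log (ratio_pos hxs hx.1) (hx.2 i)

theorem bddBelow_dotProduct_log_stratum {z : Fin n → Fin m → ℕ} {xstar : Fin m → ℝ}
    {μ : Equiv.Perm (Fin n)} (hxs : ∀ l, 0 < xstar l) {y : Fin (n - 1) → ℝ} (hy : 0 ≤ y) :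
    BddBelow ((fun x => (y ᵥ* stratumMatrix z μ) ⬝ᵥ (Real.log ∘ x)) '' stratum z xstar μ) := by
  refine ⟨(y ᵥ* stratumMatrix z μ) ⬝ᵥ (Real.log ∘ xstar), ?_⟩
  rintro _ ⟨x, hx, rfl⟩
  have := dotProduct_nonneg_of_nonneg hy fun i => (stratumMatrix_mulVec_log_pos hxs hx i).le
  rw [Matrix.dotProduct_mulVec, dotProduct_sub] at this
  linarith

end MassAction

theorem eq_zero_of_bddBelow_dotProduct_log {m : ℕ} {S : Set (Fin m → ℝ)} {I : Finset (Fin m)}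
    {W x₀ : Fin m → ℝ} (hS : ∀ x ∈ S, ∀ l, 0 < x l) (hx₀ : x₀ ∈ closure S ∩ LI I)
    (hW : ∀ l ∈ I, 0 ≤ W l) (hbdd : BddBelow ((fun x => W ⬝ᵥ (Real.log ∘ x)) '' S)) :
    ∀ l ∈ I, W l = 0 := by
  intro l₀ hl₀
  refine ((hW l₀ hl₀).eq_or_lt.resolve_right fun hpos => ?_).symm
  obtain ⟨C, hC⟩ := hbdd
  have := mem_closure_iff_nhdsWithin_neBot.1 hx₀.1
  have hcoord : ∀ l, Tendsto (fun x : Fin m → ℝ => x l) (𝓝[S] x₀) (𝓝 (x₀ l)) := fun l =>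
    ((continuous_apply l).tendsto x₀).mono_left nhdsWithin_le_nhds
  have hpos_ev : ∀ᶠ x in 𝓝[S] x₀, ∀ l, 0 < x l := eventually_mem_nhdsWithin.mono hS
  have hI : ∀ᶠ x in 𝓝[S] x₀, ∀ l ∈ I, W l * Real.log (x l) ≤ 0 := by
    refine (Filter.eventually_all_finset I).2 fun l hl => ?_
    have hlt : x₀ l < 1 := by rw [hx₀.2.1 l hl]; exact one_pos
    filter_upwards [hpos_ev, (hcoord l).eventually (gt_mem_nhds hlt)] with x hx hx1
    exact mul_nonpos_of_nonneg_of_nonpos (hW l hl) (Real.log_nonpos (hx l).le hx1.le)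
  have hIc : Tendsto (fun x => ∑ l ∈ Iᶜ, W l * Real.log (x l)) (𝓝[S] x₀)
      (𝓝 (∑ l ∈ Iᶜ, W l * Real.log (x₀ l))) :=
    tendsto_finsetSum _ fun l hl => ((Real.continuousAt_log
      (hx₀.2.2 l (Finset.mem_compl.1 hl)).ne').tendsto.comp (hcoord l)).const_mul _
  have hlog : Tendsto (fun x => W l₀ * Real.log (x l₀)) (𝓝[S] x₀) atBot := by
    refine (Real.tendsto_log_nhdsNE_zero.comp
      (tendsto_nhdsWithin_iff.2 ⟨?_, ?_⟩)).const_mul_atBot hpos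
    · simpa [hx₀.2.1 l₀ hl₀] using hcoord l₀
    · exact hpos_ev.mono fun x hx => (hx l₀).ne'
  have hbound : ∀ᶠ x in 𝓝[S] x₀, W ⬝ᵥ (Real.log ∘ x) ≤
      W l₀ * Real.log (x l₀) + ∑ l ∈ Iᶜ, W l * Real.log (x l) := by
    filter_upwards [hI] with x hx
    rw [dotProduct, ← Finset.sum_add_sum_compl I, ← Finset.add_sum_erase I _ hl₀]
    have := Finset.sum_nonpos fun l (hl : l ∈ I.erase l₀) => hx l (Finset.mem_of_mem_erase hl)
    simp only [Function.comp_apply] at this ⊢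
    linarith
  have htend := tendsto_atBot_mono' _ hbound (tendsto_atBot_add_right_of_ge' _ _ hlog
    ((hIc.eventually (gt_mem_nhds (lt_add_one _))).mono fun _ h => h.le))
  obtain ⟨x, hxC, hxS⟩ := ((htend.eventually_lt_atBot C).and self_mem_nhdsWithin).exists
  exact (hC ⟨x, hxS, rfl⟩).not_gt hxC

section Cyclic

variable {m n : ℕ}

theorem cyc_eq_finRotate (i : Fin n) : cyc i = finRotate n i := by
  rw [finRotate_apply]
  ext
  simp [cyc, Fin.val_add]

theorem cyc_injective : Function.Injective (cyc : Fin n → Fin n) := by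
  simpa only [funext cyc_eq_finRotate] using (finRotate n).injective

theorem eq_of_apply_finRotate_eq {α : Type*} {f : Fin n → α} (hf : ∀ i, f (finRotate n i) = f i)
    (i j : Fin n) : f i = f j := by
  obtain _ | n := n
  · exact i.elim0
  suffices h : ∀ i, f i = f 0 from (h i).trans (h j).symm
  refine Fin.induction rfl fun i hi => ?_
  rw [← hi, ← hf i.castSucc, finRotate_apply, Fin.coeSucc_eq_succ]

namespace isCyclic

variable {k : Fin n → Fin n → ℝ}

theorem sum_mul_out (hk : isCyclic k) (i : Fin n) (g : Fin n → ℝ) :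
    ∑ j, k i j * g j = k i (cyc i) * g (cyc i) :=
  Fintype.sum_eq_single _ fun j hj => by rw [hk.2 i j hj, zero_mul]

theorem sum_mul_in (hk : isCyclic k) (i : Fin n) (g : Fin n → ℝ) :
    ∑ j, k j (cyc i) * g j = k i (cyc i) * g i :=
  Fintype.sum_eq_single _ fun j hj => by
    rw [hk.2 j (cyc i) fun h => hj (cyc_injective h).symm, zero_mul]

theorem flux_eq (hk : isCyclic k) {z : Fin n → Fin m → ℕ} {xstar : Fin m → ℝ}
    (hcb : complexBalanced z k xstar) (i j : Fin n) :
    k i (cyc i) * mono (z i) xstar = k j (cyc j) * mono (z j) xstar := by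
  refine eq_of_apply_finRotate_eq (f := fun i => k i (cyc i) * mono (z i) xstar) (fun i => ?_) i j
  have hout : ∑ j, k (cyc i) j = k (cyc i) (cyc (cyc i)) := by
    simpa using hk.sum_mul_out (cyc i) fun _ => 1
  have := hcb (cyc i)
  rw [hk.sum_mul_in, hout] at this
  rw [← cyc_eq_finRotate, this, mul_comm]

end isCyclic

end Cyclic

section Dissipation

variable {m n : ℕ}

theorem mono_eq_mul_ratio (zv : Fin m → ℕ) {xstar : Fin m → ℝ} (hxs : ∀ l, xstar l ≠ 0)
    (x : Fin m → ℝ) : mono zv x = mono zv xstar * ratio xstar x zv := by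
  simp only [mono, ratio, ← Finset.prod_mul_distrib, div_pow]
  exact Finset.prod_congr rfl fun l _ => (mul_div_cancel₀ _ (pow_ne_zero _ (hxs l))).symm

theorem sum_mul_maf (z : Fin n → Fin m → ℕ) (k : Fin n → Fin n → ℝ) (x α : Fin m → ℝ) :
    ∑ l, α l * maf z k x l = ∑ i, ∑ j, k i j * (mono (z i) x *
      ((complexMatrix z *ᵥ α) j - (complexMatrix z *ᵥ α) i)) := by
  simp only [maf, complexMatrix, mulVec, dotProduct, Matrix.of_apply, Finset.mul_sum,
    ← Finset.sum_sub_distrib]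
  rw [Finset.sum_comm]
  refine Finset.sum_congr rfl fun i _ => ?_
  rw [Finset.sum_comm]
  exact Finset.sum_congr rfl fun j _ => Finset.sum_congr rfl fun l _ => by ring

theorem antitone_of_embS_le_emb {α : Type*} [Preorder α] {f : Fin n → α}
    (hf : ∀ i : Fin (n - 1), f (embS i) ≤ f (emb i)) : Antitone f := by
  obtain _ | n := n
  · exact Subsingleton.antitone f
  exact Fin.antitone_iff_succ_le.2 hf

theorem antitone_ratio_of_mem_closure_stratum {z : Fin n → Fin m → ℕ} {xstar x : Fin m → ℝ}
    {μ : Equiv.Perm (Fin n)} (hx : x ∈ closure (stratum z xstar μ)) :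
    Antitone fun p => ratio xstar x (z (μ p)) := by
  have hcont : ∀ zv, Continuous fun x : Fin m → ℝ => ratio xstar x zv := fun zv => by
    unfold ratio
    fun_prop
  have hclosed := isClosed_iInter fun i : Fin (n - 1) =>
    isClosed_le (hcont (z (μ (embS i)))) (hcont (z (μ (emb i))))
  exact antitone_of_embS_le_emb (Set.mem_iInter.1
    (closure_minimal (fun y hy => Set.mem_iInter.2 fun i => (hy.2 i).le) hclosed hx))

theorem sum_mul_maf_nonpos {z : Fin n → Fin m → ℕ} {k : Fin n → Fin n → ℝ} (hk : isCyclic k)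
    {xstar : Fin m → ℝ} (hxs : ∀ l, 0 < xstar l) (hcb : complexBalanced z k xstar)
    {μ : Equiv.Perm (Fin n)} {α : Fin m → ℝ} (hα : 0 ≤ stratumMatrix z μ *ᵥ α)
    {x : Fin m → ℝ} (hx : x ∈ closure (stratum z xstar μ)) :
    ∑ l, α l * maf z k x l ≤ 0 := by
  obtain _ | n := n
  · simp [maf]
  set a := complexMatrix z *ᵥ α
  set r := fun j => ratio xstar x (z j)
  set q := k 0 (cyc 0) * mono (z 0) xstar
  have hq : 0 ≤ q := mul_nonneg (hk.1 0).le (Finset.prod_nonneg fun l _ => pow_nonneg (hxs l).le _)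
  have hsum : ∑ l, α l * maf z k x l = q * (∑ j, r j * a (finRotate _ j) - ∑ j, r j * a j) := by
    rw [sum_mul_maf, mul_sub, Finset.mul_sum, Finset.mul_sum, ← Finset.sum_sub_distrib]
    refine Finset.sum_congr rfl fun j _ => ?_
    rw [hk.sum_mul_out, mono_eq_mul_ratio _ (fun l => (hxs l).ne'), ← mul_assoc, ← mul_assoc,
      hk.flux_eq hcb j 0, cyc_eq_finRotate j]
    ring
  have ha : Antitone (a ∘ μ) := antitone_of_embS_le_emb fun i =>
    sub_nonneg.1 (stratumMatrix_mulVec z μ α i ▸ hα i)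
  have hmono : Monovary r a := by
    simpa [Function.comp_def] using
      ((antitone_ratio_of_mem_closure_stratum hx).monovary ha).comp_right μ.symm
  rw [hsum]
  exact mul_nonpos_of_nonneg_of_nonpos hq (sub_nonpos.2 hmono.sum_mul_comp_perm_le_sum_mul)

end Dissipation

theorem stmt6_general {m n : ℕ} (z : Fin n → Fin m → ℕ) (k : Fin n → Fin n → ℝ) (hcyc : isCyclic k)
    (xstar : Fin m → ℝ) (hxs : ∀ l, 0 < xstar l)
    (hcb : complexBalanced z k xstar)
    (μ : Equiv.Perm (Fin n)) (I : Finset (Fin m))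
    (h : (closure (stratum z xstar μ) ∩ LI I).Nonempty) :
    ∃ α : Fin m → ℝ, (∀ i ∈ I, α i < 0) ∧ (∀ i ∉ I, α i = 0) ∧
      ∀ x ∈ closure (stratum z xstar μ), ∑ l, α l * maf z k x l ≤ 0 := by
  obtain ⟨x₀, hx₀⟩ := h
  obtain ⟨α, hαI, hαIc, hα⟩ := (stratumMatrix z μ).exists_neg_on_mulVec_nonneg I fun y hy hW =>
    (Finset.sum_eq_zero (eq_zero_of_bddBelow_dotProduct_log (fun x hx => hx.1) hx₀ hW
      (bddBelow_dotProduct_log_stratum hxs hy))).le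
  exact ⟨α, hαI, hαIc, fun x hx => sum_mul_maf_nonpos hcyc hxs hcb hα hx⟩

/-- for a cyclic complex balanced system, if `cl(S_μ) ∩ L_I ≠ ∅` then there
is `α` negative on `I`, zero off `I`, with `⟨α, f(x)⟩ ≤ 0` on `cl(S_μ)`. -/
theorem stmt6 {m n : ℕ} (hn : 2 ≤ n) (z : Fin n → Fin m → ℕ) (hz : Function.Injective z)
    (k : Fin n → Fin n → ℝ) (hknn : ∀ i j, 0 ≤ k i j) (hkd : ∀ i, k i i = 0)
    (hcyc : isCyclic k)
    (xstar : Fin m → ℝ) (hxs : ∀ l, 0 < xstar l)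
    (hcb : complexBalanced z k xstar)
    (μ : Equiv.Perm (Fin n)) (I : Finset (Fin m)) (hI : I.Nonempty)
    (h : (closure (stratum z xstar μ) ∩ LI I).Nonempty) :
    ∃ α : Fin m → ℝ, (∀ i ∈ I, α i < 0) ∧ (∀ i ∉ I, α i = 0) ∧
      ∀ x ∈ closure (stratum z xstar μ), ∑ l, α l * maf z k x l ≤ 0 :=
  stmt6_general z k hcyc xstar hxs hcb μ I h
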